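/- Let (𝒜, ≺, ≻, ⋎, ·) be a twisted tridendriform algebra and set x⋆y := x≺y + x≻y + x⋎y + x·y. Then the multiplication on 𝒜⊕𝒜 defined by (x,x') ∗ (y,y') = (x⋆y, x'·y' + x≻y' + x'≺y + x⋎y) is associative. -/
import Mathlib


/-- A twisted tridendriform algebra structure on `V`: four bilinear operations
`≺ = P`, `≻ = S`, `⋎ = C`, `· = M` satisfying (TT1)–(TT8), where
`x ⋆ y := x≺y + x≻y + x⋎y + x·y`. -/
def IsTwistedTridend {k V : Type*} [Field k] [AddCommGroup V] [Module k V]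
    (P S C M : V →ₗ[k] V →ₗ[k] V) : Prop :=
  ∀ x y z : V,
    P (P x y) z = P x (P y z + S y z + C y z + M y z) + M x (C y z) ∧
    P (S x y) z = S x (P y z) ∧
    S (P x y + S x y + C x y + M x y) z + M (C x y) z = S x (S y z) ∧
    M (S x y) z = S x (M y z) ∧
    M (P x y) z = M x (S y z) ∧
    P (M x y) z = M x (P y z) ∧
    M (M x y) z = M x (M y z) ∧
    P (C x y) z + C (P x y + S x y + C x y + M x y) z
      = S x (C y z) + C x (P y z + S y z + C y z + M y z)

/-- `x ⋆ y := x≺y + x≻y + x⋎y + x·y`. -/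
def ttStar {k V : Type*} [Field k] [AddCommGroup V] [Module k V]
    (P S C M : V →ₗ[k] V →ₗ[k] V) (x y : V) : V :=
  P x y + S x y + C x y + M x y

/-- The multiplication `(x,x') ∗ (y,y') = (x⋆y, x'·y' + x≻y' + x'≺y + x⋎y)` on `𝒜 ⊕ 𝒜`. -/
def ttMul {k V : Type*} [Field k] [AddCommGroup V] [Module k V]
    (P S C M : V →ₗ[k] V →ₗ[k] V) (p q : V × V) : V × V :=
  (ttStar P S C M p.1 q.1, M p.2 q.2 + S p.1 q.2 + P p.2 q.1 + C p.1 q.1)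

/-- in a twisted tridendriform algebra, the multiplication `∗` on
`𝒜 ⊕ 𝒜` is associative. -/
theorem ttMul_assoc {k V : Type*} [Field k] [AddCommGroup V] [Module k V]
    (P S C M : V →ₗ[k] V →ₗ[k] V) (h : IsTwistedTridend P S C M) :
    ∀ p q s : V × V,
      ttMul P S C M (ttMul P S C M p q) s = ttMul P S C M p (ttMul P S C M q s) := by

  rintro ⟨x, x'⟩ ⟨y, y'⟩ ⟨z, z'⟩
  obtain ⟨a1, a2, a3, a4, a5, a6, a7, a8⟩ := h x y z
  have b7 := (h x' y' z').2.2.2.2.2.2.1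
  have b4 := (h x y' z').2.2.2.1
  have b5 := (h x' y z').2.2.2.2.1
  have b3 := (h x y z').2.2.1
  have b6 := (h x' y' z).2.2.2.2.2.1
  have b2 := (h x y' z).2.1
  have b1 := (h x' y z).1
  simp only [ttMul, ttStar, Prod.mk.injEq, map_add, LinearMap.add_apply] at a1 a3 a8 b1 b3 ⊢
  constructor
  · linear_combination (norm := abel) a1 + a2 + a3 + a4 + a5 + a6 + a7 + a8
  · linear_combination (norm := abel) b7 + b4 + b5 + b3 + b6 + b2 + b1 + a8
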